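/- Equivalence of the two call-by-value axiomatizations: for terms M and N of the call-by-value λ□-calculus (restricted so that box bodies are values, hence containing no let), M =v N holds if and only if M =c N holds, where =v is the reflexive transitive symmetric closure of the call-by-value reduction →v and =c is the reflexive transitive symmetric closure of the computational reduction →c. -/
import Mathlib


namespace LamBox

inductive Ty : Type
  | base : ℕ → Ty
  | arr : Ty → Ty → Ty
  | box : Ty → Ty
  deriving DecidableEq

inductive Tm : Type
  | const : ℕ → Tm
  | var : ℕ → Tm
  | lam : ℕ → Tm → Tm
  | app : Tm → Tm → Tm
  | box : List ℕ → List Tm → Tm → Tm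

mutual
  def fv : Tm → Finset ℕ
    | .const _ => ∅
    | .var x => {x}
    | .lam x M => fv M \ {x}
    | .app M N => fv M ∪ fv N
    | .box _ Ns _ => fvList Ns
  def fvList : List Tm → Finset ℕ
    | [] => ∅
    | N :: Ns => fv N ∪ fvList Ns
end

mutual
  def subst (x : ℕ) (P : Tm) : Tm → Tm
    | .const c => .const c
    | .var y => if y = x then P else .var y
    | .lam y M => if y = x then .lam y M else .lam y (subst x P M)
    | .app M N => .app (subst x P M) (subst x P N)
    | .box xs Ns M => .box xs (substList x P Ns) M
  def substList (x : ℕ) (P : Tm) : List Tm → List Tm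
    | [] => []
    | N :: Ns => subst x P N :: substList x P Ns
end

abbrev Ctx := List (ℕ × Ty)

inductive Lookup : Ctx → ℕ → Ty → Prop
  | here {Γ x τ} : Lookup ((x, τ) :: Γ) x τ
  | there {Γ x τ y σ} : x ≠ y → Lookup Γ x τ → Lookup ((y, σ) :: Γ) x τ

inductive HasType (ct : ℕ → Ty) : Ctx → Tm → Ty → Prop
  | const {Γ c} : HasType ct Γ (.const c) (ct c)
  | var {Γ x τ} : Lookup Γ x τ → HasType ct Γ (.var x) τ
  | lam {Γ x σ M τ} : HasType ct ((x, σ) :: Γ) M τ →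
      HasType ct Γ (.lam x M) (.arr σ τ)
  | app {Γ M N σ τ} : HasType ct Γ M (.arr σ τ) → HasType ct Γ N σ →
      HasType ct Γ (.app M N) τ
  | box {Γ} {xs : List ℕ} {σs : List Ty} {Ns : List Tm} {M τ} :
      xs.length = σs.length →
      HasType ct ((xs.zip σs).reverse) M τ →
      Ns.length = σs.length →
      (∀ i (hN : i < Ns.length) (hσ : i < σs.length),
        HasType ct Γ (Ns.get ⟨i, hN⟩) (.box (σs.get ⟨i, hσ⟩))) →
      HasType ct Γ (.box xs Ns M) (.box τ)

inductive StepN : Tm → Tm → Prop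
  | beta {x M N} : StepN (.app (.lam x M) N) (subst x N M)
  | eta {x M} : x ∉ fv M → StepN (.lam x (.app M (.var x))) M
  | idBox {x M} : StepN (.box [x] [M] (.var x)) M
  | betaBox {ws zs : List ℕ} {x : ℕ} {Ps Qs Ls : List Tm} {ys : List ℕ} {N M : Tm} :
      ws.length = Ps.length →
      StepN (.box (ws ++ x :: zs) (Ps ++ (Tm.box ys Ls N) :: Qs) M)
            (.box (ws ++ ys ++ zs) (Ps ++ Ls ++ Qs) (subst x N M))
  | appL {M M' N} : StepN M M' → StepN (.app M N) (.app M' N)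
  | appR {M N N'} : StepN N N' → StepN (.app M N) (.app M N')
  | lam {x M M'} : StepN M M' → StepN (.lam x M) (.lam x M')
  | boxArg {xs : List ℕ} {Ps Qs : List Tm} {N N' M} : StepN N N' →
      StepN (.box xs (Ps ++ N :: Qs) M) (.box xs (Ps ++ N' :: Qs) M)
  | boxBody {xs : List ℕ} {Ns : List Tm} {M M'} : StepN M M' →
      StepN (.box xs Ns M) (.box xs Ns M')


/-- Terms of the computational λ□-calculus: the call-by-value λ□-calculus
extended with `let x = N in M` (`letE x N M`). -/
inductive TmC : Type
  | const : ℕ → TmC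
  | var : ℕ → TmC
  | lam : ℕ → TmC → TmC
  | app : TmC → TmC → TmC
  | letE : ℕ → TmC → TmC → TmC
  | box : List ℕ → List TmC → TmC → TmC

mutual
  def fvC : TmC → Finset ℕ
    | .const _ => ∅
    | .var x => {x}
    | .lam x M => fvC M \ {x}
    | .app M N => fvC M ∪ fvC N
    | .letE x N M => fvC N ∪ (fvC M \ {x})
    | .box _ Ns _ => fvCList Ns
  def fvCList : List TmC → Finset ℕ
    | [] => ∅
    | N :: Ns => fvC N ∪ fvCList Ns
end

mutual
  def substC (x : ℕ) (P : TmC) : TmC → TmC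
    | .const c => .const c
    | .var y => if y = x then P else .var y
    | .lam y M => if y = x then .lam y M else .lam y (substC x P M)
    | .app M N => .app (substC x P M) (substC x P N)
    | .letE y N M =>
        if y = x then .letE y (substC x P N) M
        else .letE y (substC x P N) (substC x P M)
    | .box xs Ns M => .box xs (substCList x P Ns) M
  def substCList (x : ℕ) (P : TmC) : List TmC → List TmC
    | [] => []
    | N :: Ns => substC x P N :: substCList x P Ns
end

/-- Values of the computational λ□-calculus. -/
inductive IsValueC : TmC → Prop
  | const (c) : IsValueC (.const c)
  | var (x) : IsValueC (.var x)
  | lam (x M) : IsValueC (.lam x M)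
  | box {xs : List ℕ} {Vs : List TmC} {M} : (∀ V ∈ Vs, IsValueC V) →
      IsValueC (.box xs Vs M)

/-- Typing of the computational λ□-calculus (the rules of the λ□-calculus
together with the rule for `let`). -/
inductive HasTypeC (ct : ℕ → Ty) : Ctx → TmC → Ty → Prop
  | const {Γ c} : HasTypeC ct Γ (.const c) (ct c)
  | var {Γ x τ} : Lookup Γ x τ → HasTypeC ct Γ (.var x) τ
  | lam {Γ x σ M τ} : HasTypeC ct ((x, σ) :: Γ) M τ →
      HasTypeC ct Γ (.lam x M) (.arr σ τ)
  | app {Γ M N σ τ} : HasTypeC ct Γ M (.arr σ τ) → HasTypeC ct Γ N σ →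
      HasTypeC ct Γ (.app M N) τ
  | letE {Γ x N M σ τ} : HasTypeC ct Γ N σ → HasTypeC ct ((x, σ) :: Γ) M τ →
      HasTypeC ct Γ (.letE x N M) τ
  | box {Γ} {xs : List ℕ} {σs : List Ty} {Ns : List TmC} {M τ} :
      xs.length = σs.length →
      HasTypeC ct ((xs.zip σs).reverse) M τ →
      Ns.length = σs.length →
      (∀ i (hN : i < Ns.length) (hσ : i < σs.length),
        HasTypeC ct Γ (Ns.get ⟨i, hN⟩) (.box (σs.get ⟨i, hσ⟩))) →
      HasTypeC ct Γ (.box xs Ns M) (.box τ)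

/-- Simple evaluation contexts `C ::= −M | V− | box x⃗ be V⃗,−,M⃗ in M`. -/
inductive SCtxC : Type
  | appL : TmC → SCtxC
  | appR : TmC → SCtxC
  | box : List ℕ → List TmC → List TmC → TmC → SCtxC

def fillSC : SCtxC → TmC → TmC
  | .appL M, h => .app h M
  | .appR V, h => .app V h
  | .box xs Vs Ms M, h => .box xs (Vs ++ h :: Ms) M

def GoodSC : SCtxC → Prop
  | .appL _ => True
  | .appR V => IsValueC V
  | .box _ Vs _ _ => ∀ V ∈ Vs, IsValueC V

def fvSC : SCtxC → Finset ℕ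
  | .appL M => fvC M
  | .appR V => fvC V
  | .box _ Vs Ms _ => fvCList Vs ∪ fvCList Ms

/-- The computational reduction `→c` (compatible closure). -/
inductive StepC : TmC → TmC → Prop
  | idLet {x M} : StepC (.letE x M (.var x)) M
  | betaLet {x V M} : IsValueC V → StepC (.letE x V M) (substC x V M)
  | betaV {x M V} : IsValueC V → StepC (.app (.lam x M) V) (substC x V M)
  | etaV {x V} : IsValueC V → x ∉ fvC V → StepC (.lam x (.app V (.var x))) V
  | comp {x y L N M} : y ∉ fvC M →
      StepC (.letE x (.letE y L N) M) (.letE y L (.letE x N M))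
  | letC {C A x} : GoodSC C → ¬ IsValueC A → x ∉ fvSC C →
      StepC (fillSC C A) (.letE x A (fillSC C (.var x)))
  | idBox {x M} : StepC (.box [x] [M] (.var x)) M
  | betaBoxV {ws zs : List ℕ} {x : ℕ} {Ws Ps Ns : List TmC} {ys : List ℕ} {V M} :
      ws.length = Ws.length → (∀ W ∈ Ws, IsValueC W) → IsValueC V →
      StepC (.box (ws ++ x :: zs) (Ws ++ (TmC.box ys Ns V) :: Ps) M)
            (.box (ws ++ ys ++ zs) (Ws ++ Ns ++ Ps) (substC x V M))
  | appL {M M' N} : StepC M M' → StepC (.app M N) (.app M' N)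
  | appR {M N N'} : StepC N N' → StepC (.app M N) (.app M N')
  | lam {x M M'} : StepC M M' → StepC (.lam x M) (.lam x M')
  | letL {x N N' M} : StepC N N' → StepC (.letE x N M) (.letE x N' M)
  | letR {x N M M'} : StepC M M' → StepC (.letE x N M) (.letE x N M')
  | boxArg {xs : List ℕ} {Ps Qs : List TmC} {N N' M} : StepC N N' →
      StepC (.box xs (Ps ++ N :: Qs) M) (.box xs (Ps ++ N' :: Qs) M)
  | boxBody {xs : List ℕ} {Ns : List TmC} {M M'} : StepC M M' →
      StepC (.box xs Ns M) (.box xs Ns M')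

/-- The restriction that every box subterm has a value body. -/
inductive RestrictedC : TmC → Prop
  | const (c) : RestrictedC (.const c)
  | var (x) : RestrictedC (.var x)
  | lam {x M} : RestrictedC M → RestrictedC (.lam x M)
  | app {M N} : RestrictedC M → RestrictedC N → RestrictedC (.app M N)
  | letE {x N M} : RestrictedC N → RestrictedC M → RestrictedC (.letE x N M)
  | box {xs : List ℕ} {Ns : List TmC} {M} : (∀ N ∈ Ns, RestrictedC N) →
      RestrictedC M → IsValueC M → RestrictedC (.box xs Ns M)

/-- Evaluation contexts `E ::= − | C[E]`. -/
abbrev ECtxC := List SCtxC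

def fillEC : ECtxC → TmC → TmC
  | [], h => h
  | C :: E, h => fillSC C (fillEC E h)

def GoodEC (E : ECtxC) : Prop := ∀ C ∈ E, GoodSC C

/-- The call-by-value reduction `→v` (compatible closure), on the terms of the
computational λ□-calculus; the rules never mention `let`, so on `let`-free
terms this is exactly the reduction of the call-by-value λ□-calculus. -/
inductive StepVC : TmC → TmC → Prop
  | idArr {x M} : StepVC (.app (.lam x (.var x)) M) M
  | betaV {x M V} : IsValueC V → StepVC (.app (.lam x M) V) (substC x V M)
  | etaV {x V} : IsValueC V → x ∉ fvC V → StepVC (.lam x (.app V (.var x))) V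
  | lift {C x M N} : GoodSC C → x ∉ fvSC C →
      StepVC (fillSC C (.app (.lam x M) N)) (.app (.lam x (fillSC C M)) N)
  | flat {C y M x} : GoodSC C → (∀ V, C ≠ .appR V) → x ∉ fvSC C → x ≠ y →
      StepVC (fillSC C (.app (.var y) M))
             (.app (.lam x (fillSC C (.var x))) (.app (.var y) M))
  | betaOmega {E : ECtxC} {x y M} : GoodEC E → x ∉ fvC (fillEC E (.var y)) →
      StepVC (.app (.lam x (fillEC E (.app (.var y) (.var x)))) M)
             (fillEC E (.app (.var y) M))
  | idBox {x M} : StepVC (.box [x] [M] (.var x)) M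
  | betaBoxV {ws zs : List ℕ} {x : ℕ} {Ws Ps Ns : List TmC} {ys : List ℕ} {V M} :
      ws.length = Ws.length → (∀ W ∈ Ws, IsValueC W) → IsValueC V →
      StepVC (.box (ws ++ x :: zs) (Ws ++ (TmC.box ys Ns V) :: Ps) M)
             (.box (ws ++ ys ++ zs) (Ws ++ Ns ++ Ps) (substC x V M))
  | appL {M M' N} : StepVC M M' → StepVC (.app M N) (.app M' N)
  | appR {M N N'} : StepVC N N' → StepVC (.app M N) (.app M N')
  | lam {x M M'} : StepVC M M' → StepVC (.lam x M) (.lam x M')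
  | boxArg {xs : List ℕ} {Ps Qs : List TmC} {N N' M} : StepVC N N' →
      StepVC (.box xs (Ps ++ N :: Qs) M) (.box xs (Ps ++ N' :: Qs) M)
  | boxBody {xs : List ℕ} {Ns : List TmC} {M M'} : StepVC M M' →
      StepVC (.box xs Ns M) (.box xs Ns M')

/-- Terms containing no `let`, i.e. terms of the call-by-value λ□-calculus. -/
inductive LetFree : TmC → Prop
  | const (c) : LetFree (.const c)
  | var (x) : LetFree (.var x)
  | lam {x M} : LetFree M → LetFree (.lam x M)
  | app {M N} : LetFree M → LetFree N → LetFree (.app M N)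
  | box {xs : List ℕ} {Ns : List TmC} {M} : (∀ N ∈ Ns, LetFree N) →
      LetFree M → LetFree (.box xs Ns M)

section Aux
open Relation

theorem eqv_lift {α β} {R : α → α → Prop} {S : β → β → Prop} (f : α → β)
    (hf : ∀ a b, R a b → EqvGen S (f a) (f b)) {a b} (h : EqvGen R a b) :
    EqvGen S (f a) (f b) := by
  induction h with
  | rel a b hab => exact hf _ _ hab
  | refl a => exact .refl _
  | symm a b _ ih => exact .symm _ _ ih
  | trans a b c _ _ ih1 ih2 => exact .trans _ _ _ ih1 ih2

theorem eqv_congr {α} {R : α → α → Prop} (f : α → α)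
    (hf : ∀ a b, R a b → R (f a) (f b)) {a b} (h : EqvGen R a b) :
    EqvGen R (f a) (f b) :=
  eqv_lift f (fun a b hab => .rel _ _ (hf a b hab)) h

theorem fvCList_append (A B : List TmC) :
    fvCList (A ++ B) = fvCList A ∪ fvCList B := by
  induction A with
  | nil => simp [fvCList]
  | cons N Ns ih => simp [fvCList, ih, Finset.union_assoc]

theorem substCList_append (x P) (A B : List TmC) :
    substCList x P (A ++ B) = substCList x P A ++ substCList x P B := by
  induction A with
  | nil => simp [substCList]
  | cons N Ns ih => simp [substCList, ih]

mutual
theorem substC_not_mem (x P) : ∀ M, x ∉ fvC M → substC x P M = M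
  | .const c, _ => rfl
  | .var y, h => by
      simp [fvC] at h
      simp [substC, Ne.symm h]
  | .lam y M, h => by
      by_cases hy : y = x
      · simp [substC, hy]
      · have hM : x ∉ fvC M := by
          intro hm
          exact h (by simp [fvC, Finset.mem_sdiff, hm, Ne.symm hy])
        simp [substC, hy, substC_not_mem x P M hM]
  | .app M N, h => by
      simp [fvC] at h
      simp [substC, substC_not_mem x P M h.1, substC_not_mem x P N h.2]
  | .letE y N M, h => by
      simp [fvC] at h
      have hN := substC_not_mem x P N h.1
      by_cases hy : y = x
      · simp [substC, hy, hN]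
      · have hM : x ∉ fvC M := by
          intro hm
          exact hy ((h.2 hm).symm)
        simp [substC, hy, hN, substC_not_mem x P M hM]
  | .box xs Ns M, h => by
      simp [fvC] at h
      simp [substC, substCList_not_mem x P Ns h]
theorem substCList_not_mem (x P) : ∀ Ns, x ∉ fvCList Ns → substCList x P Ns = Ns
  | [], _ => rfl
  | N :: Ns, h => by
      simp [fvCList] at h
      simp [substCList, substC_not_mem x P N h.1, substCList_not_mem x P Ns h.2]
end

theorem substC_fillSC {x P C h} (hx : x ∉ fvSC C) :
    substC x P (fillSC C h) = fillSC C (substC x P h) := by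
  cases C with
  | appL M =>
      simp [fvSC] at hx
      simp [fillSC, substC, substC_not_mem x P M hx]
  | appR V =>
      simp [fvSC] at hx
      simp [fillSC, substC, substC_not_mem x P V hx]
  | box xs Vs Ms B =>
      simp [fvSC] at hx
      simp [fillSC, substC, substCList_append, substCList,
        substCList_not_mem x P Vs hx.1, substCList_not_mem x P Ms hx.2]

theorem substC_fillEC {x P E h} (hx : ∀ C ∈ E, x ∉ fvSC C) :
    substC x P (fillEC E h) = fillEC E (substC x P h) := by
  induction E with
  | nil => rfl
  | cons C E ih =>
      simp only [fillEC]
      rw [substC_fillSC (hx C (by simp)), ih (fun C hC => hx C (by simp [hC]))]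

theorem mem_fvC_fillSC {x C h} :
    x ∈ fvC (fillSC C h) ↔ x ∈ fvSC C ∨ x ∈ fvC h := by
  cases C <;>
    simp only [fillSC, fvC, fvSC, fvCList_append, fvCList, Finset.mem_union] <;>
    tauto

theorem mem_fvC_fillEC {x E h} :
    x ∈ fvC (fillEC E h) ↔ (∃ C ∈ E, x ∈ fvSC C) ∨ x ∈ fvC h := by
  induction E with
  | nil => simp [fillEC]
  | cons C E ih =>
      simp only [fillEC, mem_fvC_fillSC, ih]
      constructor
      · rintro (hC | ⟨C', hC', hx⟩ | hh)
        exacts [Or.inl ⟨C, by simp, hC⟩, Or.inl ⟨C', by simp [hC'], hx⟩, Or.inr hh]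
      · rintro (⟨C', hC', hx⟩ | hh)
        · rcases List.mem_cons.1 hC' with rfl | hC'
          exacts [Or.inl hx, Or.inr (Or.inl ⟨C', hC', hx⟩)]
        · exact Or.inr (Or.inr hh)

theorem stepC_fillSC (C) {a b} (h : StepC a b) :
    StepC (fillSC C a) (fillSC C b) := by
  cases C with
  | appL M => exact .appL h
  | appR V => exact .appR h
  | box xs Vs Ms B => exact .boxArg h

theorem stepV_fillSC (C) {a b} (h : StepVC a b) :
    StepVC (fillSC C a) (fillSC C b) := by
  cases C with
  | appL M => exact .appL h
  | appR V => exact .appR h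
  | box xs Vs Ms B => exact .boxArg h

theorem stepC_fillEC (E) {a b} (h : StepC a b) :
    StepC (fillEC E a) (fillEC E b) := by
  induction E with
  | nil => exact h
  | cons C E ih => exact stepC_fillSC C ih

theorem fresh (S : Finset ℕ) : ∃ z, z ∉ S := Infinite.exists_notMem_finset S

end Aux

section Dir1
open Relation

theorem eqv_one {R : TmC → TmC → Prop} {a b} (h : R a b) : Relation.EqvGen R a b :=
  .rel a b h

theorem letexpC {C A z} (hC : GoodSC C) (hz : z ∉ fvSC C) :
    EqvGen StepC (fillSC C A) (.letE z A (fillSC C (.var z))) := by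
  by_cases h : IsValueC A
  · refine .symm _ _ (.rel _ _ ?_)
    have hb := StepC.betaLet (x := z) (V := A) (M := fillSC C (.var z)) h
    rwa [substC_fillSC hz, show substC z A (.var z) = A by simp [substC]] at hb
  · exact .rel _ _ (StepC.letC hC h hz)

theorem letexpEC {E A z} (hE : GoodEC E) (hz : ∀ C ∈ E, z ∉ fvSC C) :
    EqvGen StepC (fillEC E A) (.letE z A (fillEC E (.var z))) := by
  induction E with
  | nil => exact .symm _ _ (.rel _ _ StepC.idLet)
  | cons C E ih =>
    obtain ⟨u, hu⟩ := fresh (fvSC C ∪ {z})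
    simp only [Finset.mem_union, Finset.mem_singleton, not_or] at hu
    have hCz : z ∉ fvSC C := hz C (by simp)
    have hE' : GoodEC E := fun C' h' => hE C' (by simp [h'])
    have hz' : ∀ C' ∈ E, z ∉ fvSC C' := fun C' h' => hz C' (by simp [h'])
    have step1 : EqvGen StepC (fillEC (C :: E) A)
        (.letE u (fillEC E A) (fillSC C (.var u))) :=
      letexpC (hE C (by simp)) hu.1
    have step2 : EqvGen StepC (.letE u (fillEC E A) (fillSC C (.var u)))
        (.letE u (.letE z A (fillEC E (.var z))) (fillSC C (.var u))) :=
      eqv_congr (fun t => .letE u t (fillSC C (.var u)))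
        (fun _ _ hh => StepC.letL hh) (ih hE' hz')
    have step3 : StepC (.letE u (.letE z A (fillEC E (.var z))) (fillSC C (.var u)))
        (.letE z A (.letE u (fillEC E (.var z)) (fillSC C (.var u)))) := by
      refine StepC.comp ?_
      intro hm
      rcases mem_fvC_fillSC.1 hm with h1 | h1
      · exact hCz h1
      · simp only [fvC, Finset.mem_singleton] at h1; exact hu.2 h1.symm
    have step4 : EqvGen StepC (.letE z A (.letE u (fillEC E (.var z)) (fillSC C (.var u))))
        (.letE z A (fillSC C (fillEC E (.var z)))) :=
      eqv_congr (fun t => .letE z A t) (fun _ _ hh => StepC.letR hh)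
        (.symm _ _ (letexpC (hE C (by simp)) hu.1))
    exact ((step1.trans _ _ _ step2).trans _ _ _ (.rel _ _ step3)).trans _ _ _ step4

theorem stepV_to_eqvC {P Q} (h : StepVC P Q) : EqvGen StepC P Q := by
  induction h with
  | @idArr x M =>
    have h1 : EqvGen StepC (.app (.lam x (.var x)) M)
        (.letE x M (.app (.lam x (.var x)) (.var x))) :=
      letexpC (C := .appR (.lam x (.var x))) (A := M) (z := x)
        (IsValueC.lam _ _) (by simp [fvSC, fvC])
    have h2 : StepC (.app (.lam x (.var x)) (.var x)) (.var x) := by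
      have := StepC.betaV (x := x) (M := .var x) (V := .var x) (.var x)
      simpa [substC] using this
    have h3 : EqvGen StepC (.letE x M (.app (.lam x (.var x)) (.var x)))
        (.letE x M (.var x)) :=
      eqv_congr (fun t => .letE x M t) (fun _ _ hh => StepC.letR hh) (eqv_one (R := StepC) h2)
    exact (h1.trans _ _ _ h3).trans _ _ _ (.rel _ _ StepC.idLet)
  | betaV hV => exact .rel _ _ (StepC.betaV hV)
  | etaV hV hx => exact .rel _ _ (StepC.etaV hV hx)
  | @lift C x M N hC hx =>
    by_cases hN : IsValueC N
    · have h1 : StepC (fillSC C (.app (.lam x M) N)) (fillSC C (substC x N M)) :=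
        stepC_fillSC C (StepC.betaV hN)
      have h2 : StepC (.app (.lam x (fillSC C M)) N) (fillSC C (substC x N M)) := by
        have := StepC.betaV (x := x) (M := fillSC C M) (V := N) hN
        rwa [substC_fillSC hx] at this
      exact (EqvGen.rel _ _ h1).trans _ _ _ (.symm _ _ (eqv_one (R := StepC) h2))
    · obtain ⟨w, hw⟩ := fresh (fvSC C ∪ fvC M ∪ {x})
      obtain ⟨z, hz⟩ := fresh (fvSC C ∪ {w})
      simp only [Finset.mem_union, Finset.mem_singleton, not_or] at hw hz
      have hwM : w ∉ fvC M := hw.1.2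
      have hwC : w ∉ fvSC C := hw.1.1
      have hzC : z ∉ fvSC C := hz.1
      have L1 : EqvGen StepC (fillSC C (.app (.lam x M) N))
          (.letE z (.app (.lam x M) N) (fillSC C (.var z))) := letexpC hC hzC
      have L2 : EqvGen StepC (TmC.app (.lam x M) N)
          (.letE w N (.app (.lam x M) (.var w))) := by
        refine letexpC (C := .appR (.lam x M)) (IsValueC.lam _ _) ?_
        simp only [fvSC, fvC, Finset.mem_sdiff, not_and]
        intro hm
        exact absurd hm hwM
      have L3 : StepC (.app (.lam x M) (.var w)) (substC x (.var w) M) :=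
        StepC.betaV (.var w)
      have L4 : EqvGen StepC (.letE z (.app (.lam x M) N) (fillSC C (.var z)))
          (.letE z (.letE w N (substC x (.var w) M)) (fillSC C (.var z))) := by
        refine (eqv_congr (fun t => .letE z t (fillSC C (.var z)))
          (fun _ _ hh => StepC.letL hh) L2).trans _ _ _ ?_
        exact eqv_congr (fun t => .letE z (.letE w N t) (fillSC C (.var z)))
          (fun _ _ hh => StepC.letL (StepC.letR hh)) (eqv_one (R := StepC) L3)
      have L5 : StepC
          (.letE z (.letE w N (substC x (.var w) M)) (fillSC C (.var z)))
          (.letE w N (.letE z (substC x (.var w) M) (fillSC C (.var z)))) := by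
        refine StepC.comp ?_
        intro hm
        rcases mem_fvC_fillSC.1 hm with h1 | h1
        · exact hwC h1
        · simp only [fvC, Finset.mem_singleton] at h1; exact hz.2 h1.symm
      have L6 : EqvGen StepC
          (.letE w N (.letE z (substC x (.var w) M) (fillSC C (.var z))))
          (.letE w N (fillSC C (substC x (.var w) M))) :=
        eqv_congr (fun t => .letE w N t) (fun _ _ hh => StepC.letR hh)
          (.symm _ _ (letexpC hC hzC))
      have R1 : EqvGen StepC (TmC.app (.lam x (fillSC C M)) N)
          (.letE w N (.app (.lam x (fillSC C M)) (.var w))) := by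
        refine letexpC (C := .appR (.lam x (fillSC C M))) (IsValueC.lam _ _) ?_
        simp only [fvSC, fvC, Finset.mem_sdiff, not_and]
        intro hm
        rcases mem_fvC_fillSC.1 hm with h1 | h1
        · exact absurd h1 hwC
        · exact absurd h1 hwM
      have R2 : StepC (.app (.lam x (fillSC C M)) (.var w))
          (fillSC C (substC x (.var w) M)) := by
        have := StepC.betaV (x := x) (M := fillSC C M) (V := .var w) (.var w)
        rwa [substC_fillSC hx] at this
      have R3 : EqvGen StepC (TmC.app (.lam x (fillSC C M)) N)
          (.letE w N (fillSC C (substC x (.var w) M))) :=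
        R1.trans _ _ _ (eqv_congr (fun t => .letE w N t)
          (fun _ _ hh => StepC.letR hh) (eqv_one (R := StepC) R2))
      exact (((L1.trans _ _ _ L4).trans _ _ _ (.rel _ _ L5)).trans _ _ _ L6).trans
        _ _ _ (.symm _ _ R3)
  | @flat C y M x hC hne hx hxy =>
    have L : EqvGen StepC (fillSC C (.app (.var y) M))
        (.letE x (.app (.var y) M) (fillSC C (.var x))) := letexpC hC hx
    have R1 : EqvGen StepC (TmC.app (.lam x (fillSC C (.var x))) (.app (.var y) M))
        (.letE x (.app (.var y) M)
          (.app (.lam x (fillSC C (.var x))) (.var x))) := by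
      refine letexpC (C := .appR (.lam x (fillSC C (.var x)))) (IsValueC.lam _ _) ?_
      simp [fvSC, fvC, Finset.mem_sdiff]
    have R2 : StepC (.app (.lam x (fillSC C (.var x))) (.var x))
        (fillSC C (.var x)) := by
      have := StepC.betaV (x := x) (M := fillSC C (.var x)) (V := .var x) (.var x)
      rwa [substC_fillSC hx,
        show substC x (TmC.var x) (.var x) = .var x by simp [substC]] at this
    refine L.trans _ _ _ (.symm _ _ (R1.trans _ _ _ ?_))
    exact eqv_congr (fun t => .letE x (.app (.var y) M) t)
      (fun _ _ hh => StepC.letR hh) (eqv_one (R := StepC) R2)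
  | @betaOmega E x y M hE hx =>
    have hxE : ∀ C ∈ E, x ∉ fvSC C := fun C hC hm =>
      hx (mem_fvC_fillEC.2 (Or.inl ⟨C, hC, hm⟩))
    have hxy : x ≠ y := fun hxy =>
      hx (mem_fvC_fillEC.2 (Or.inr (by simp [fvC, hxy])))
    by_cases hM : IsValueC M
    · have := StepC.betaV (x := x) (M := fillEC E (.app (.var y) (.var x))) (V := M) hM
      rw [substC_fillEC hxE,
        show substC x M (.app (.var y) (.var x)) = .app (.var y) M by
          simp [substC, Ne.symm hxy]] at this
      exact .rel _ _ this
    · obtain ⟨w, hw⟩ := fresh (fvC (fillEC E (.var y)))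
      obtain ⟨z, hz⟩ := fresh (fvC (fillEC E (.var y)) ∪ {w})
      simp only [Finset.mem_union, Finset.mem_singleton, not_or] at hz
      have hwE : ∀ C ∈ E, w ∉ fvSC C := fun C hC hm =>
        hw (mem_fvC_fillEC.2 (Or.inl ⟨C, hC, hm⟩))
      have hwy : w ≠ y := fun h => hw (mem_fvC_fillEC.2 (Or.inr (by simp [fvC, h])))
      have hzE : ∀ C ∈ E, z ∉ fvSC C := fun C hC hm =>
        hz.1 (mem_fvC_fillEC.2 (Or.inl ⟨C, hC, hm⟩))
      have hzw : z ≠ w := hz.2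
      have L1 : EqvGen StepC
          (TmC.app (.lam x (fillEC E (.app (.var y) (.var x)))) M)
          (.letE w M (.app (.lam x (fillEC E (.app (.var y) (.var x)))) (.var w))) := by
        refine letexpC (C := .appR _) (IsValueC.lam _ _) ?_
        simp only [fvSC, fvC, Finset.mem_sdiff, not_and, not_not, Finset.mem_singleton]
        intro hm
        rcases mem_fvC_fillEC.1 hm with ⟨C, hC, hm2⟩ | hm2
        · exact absurd hm2 (hwE C hC)
        · simp only [fvC, Finset.mem_union, Finset.mem_singleton] at hm2
          rcases hm2 with h | h
          · exact absurd h hwy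
          · exact h
      have L2 : StepC (.app (.lam x (fillEC E (.app (.var y) (.var x)))) (.var w))
          (fillEC E (.app (.var y) (.var w))) := by
        have := StepC.betaV (x := x) (M := fillEC E (.app (.var y) (.var x)))
          (V := .var w) (.var w)
        rwa [substC_fillEC hxE,
          show substC x (TmC.var w) (.app (.var y) (.var x)) = .app (.var y) (.var w) by
            simp [substC, Ne.symm hxy]] at this
      have Lchain : EqvGen StepC
          (TmC.app (.lam x (fillEC E (.app (.var y) (.var x)))) M)
          (.letE w M (fillEC E (.app (.var y) (.var w)))) :=
        L1.trans _ _ _ (eqv_congr (fun t => .letE w M t)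
          (fun _ _ hh => StepC.letR hh) (eqv_one (R := StepC) L2))
      have R1 : EqvGen StepC (TmC.app (.var y) M)
          (.letE w M (.app (.var y) (.var w))) :=
        letexpC (C := .appR (.var y)) (IsValueC.var _)
          (by simpa [fvSC, fvC] using hwy)
      have R1' : EqvGen StepC (fillEC E (.app (.var y) M))
          (fillEC E (.letE w M (.app (.var y) (.var w)))) :=
        eqv_congr (fillEC E) (fun _ _ hh => stepC_fillEC E hh) R1
      have R2 : EqvGen StepC (fillEC E (.letE w M (.app (.var y) (.var w))))
          (.letE z (.letE w M (.app (.var y) (.var w))) (fillEC E (.var z))) :=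
        letexpEC hE hzE
      have R3 : StepC (.letE z (.letE w M (.app (.var y) (.var w))) (fillEC E (.var z)))
          (.letE w M (.letE z (.app (.var y) (.var w)) (fillEC E (.var z)))) := by
        refine StepC.comp ?_
        intro hm
        rcases mem_fvC_fillEC.1 hm with ⟨C, hC, hm2⟩ | hm2
        · exact hwE C hC hm2
        · simp only [fvC, Finset.mem_singleton] at hm2
          exact hzw hm2.symm
      have R4 : EqvGen StepC
          (.letE w M (.letE z (.app (.var y) (.var w)) (fillEC E (.var z))))
          (.letE w M (fillEC E (.app (.var y) (.var w)))) :=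
        eqv_congr (fun t => .letE w M t) (fun _ _ hh => StepC.letR hh)
          (.symm _ _ (letexpEC hE hzE))
      exact Lchain.trans _ _ _
        (.symm _ _ (((R1'.trans _ _ _ R2).trans _ _ _ (.rel _ _ R3)).trans _ _ _ R4))
  | idBox => exact .rel _ _ StepC.idBox
  | betaBoxV h1 h2 h3 => exact .rel _ _ (StepC.betaBoxV h1 h2 h3)
  | @appL M M' N _ ih =>
    exact eqv_congr (fun t => .app t N) (fun _ _ hh => StepC.appL hh) ih
  | @appR M N N' _ ih =>
    exact eqv_congr (fun t => .app M t) (fun _ _ hh => StepC.appR hh) ih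
  | @lam x M M' _ ih =>
    exact eqv_congr (fun t => .lam x t) (fun _ _ hh => StepC.lam hh) ih
  | @boxArg xs Ps Qs N N' M _ ih =>
    exact eqv_congr (fun t => .box xs (Ps ++ t :: Qs) M)
      (fun _ _ hh => StepC.boxArg hh) ih
  | @boxBody xs Ns M M' _ ih =>
    exact eqv_congr (fun t => .box xs Ns t) (fun _ _ hh => StepC.boxBody hh) ih

end Dir1

section Dir2
open Relation

mutual
def T : TmC → TmC
  | .const c => .const c
  | .var x => .var x
  | .lam x M => .lam x (T M)
  | .app M N => .app (T M) (T N)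
  | .letE x N M => .app (.lam x (T M)) (T N)
  | .box xs Ns M => .box xs (TList Ns) (T M)
def TList : List TmC → List TmC
  | [] => []
  | N :: Ns => T N :: TList Ns
end

theorem TList_append (A B : List TmC) : TList (A ++ B) = TList A ++ TList B := by
  induction A with
  | nil => simp [TList]
  | cons N Ns ih => simp [TList, ih]

theorem TList_eq_map (Ns : List TmC) : TList Ns = Ns.map T := by
  induction Ns with
  | nil => simp [TList]
  | cons N Ns ih => simp [TList, ih]

theorem TList_id {Ns : List TmC} (h : ∀ N ∈ Ns, T N = N) : TList Ns = Ns := by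
  induction Ns with
  | nil => rfl
  | cons N Ns ih =>
      rw [TList, h N (by simp), ih (fun N' h' => h N' (by simp [h']))]

mutual
theorem fvC_T : ∀ M, fvC (T M) = fvC M
  | .const c => rfl
  | .var x => rfl
  | .lam x M => by rw [T, fvC, fvC_T M]; rfl
  | .app M N => by rw [T, fvC, fvC_T M, fvC_T N]; rfl
  | .letE x N M => by
      rw [T]
      show fvC (.lam x (T M)) ∪ fvC (T N) = fvC (.letE x N M)
      rw [show fvC (TmC.lam x (T M)) = fvC (T M) \ {x} from rfl, fvC_T M, fvC_T N]
      rw [show fvC (TmC.letE x N M) = fvC N ∪ (fvC M \ {x}) from rfl]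
      exact Finset.union_comm _ _
  | .box xs Ns M => by rw [T, fvC, fvCList_TList Ns]; rfl
theorem fvCList_TList : ∀ Ns, fvCList (TList Ns) = fvCList Ns
  | [] => rfl
  | N :: Ns => by rw [TList, fvCList, fvC_T N, fvCList_TList Ns]; rfl
end

mutual
theorem substC_T (x P) : ∀ M, T (substC x P M) = substC x (T P) (T M)
  | .const c => rfl
  | .var y => by
      by_cases h : y = x <;> simp [substC, T, h]
  | .lam y M => by
      by_cases h : y = x <;> simp [substC, T, h, substC_T x P M]
  | .app M N => by simp [substC, T, substC_T x P M, substC_T x P N]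
  | .letE y N M => by
      by_cases h : y = x <;>
        simp [substC, T, h, substC_T x P M, substC_T x P N]
  | .box xs Ns M => by simp [substC, T, substCList_T x P Ns]
theorem substCList_T (x P) :
    ∀ Ns, TList (substCList x P Ns) = substCList x (T P) (TList Ns)
  | [] => rfl
  | N :: Ns => by simp [substCList, TList, substC_T x P N, substCList_T x P Ns]
end

theorem value_T {V} (h : IsValueC V) : IsValueC (T V) := by
  induction h with
  | const c => exact .const c
  | var x => exact .var x
  | lam x M => exact .lam x (T M)
  | box hVs ih =>
      rw [T]
      refine IsValueC.box ?_
      rw [TList_eq_map]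
      intro W hW
      obtain ⟨V, hV, rfl⟩ := List.mem_map.1 hW
      exact ih V hV

theorem T_letfree {M} (h : LetFree M) : T M = M := by
  induction h with
  | const c => rfl
  | var x => rfl
  | lam _ ih => rw [T, ih]
  | app _ _ ih1 ih2 => rw [T, ih1, ih2]
  | box _ _ ihNs ihM => rw [T, ihM, TList_id ihNs]

def TC : SCtxC → SCtxC
  | .appL M => .appL (T M)
  | .appR V => .appR (T V)
  | .box xs Vs Ms B => .box xs (TList Vs) (TList Ms) (T B)

theorem T_fillSC (C) (h : TmC) : T (fillSC C h) = fillSC (TC C) (T h) := by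
  cases C with
  | appL M => rfl
  | appR V => rfl
  | box xs Vs Ms B => simp [fillSC, TC, T, TList_append, TList]

theorem good_TC {C} (h : GoodSC C) : GoodSC (TC C) := by
  cases C with
  | appL M => trivial
  | appR V => exact value_T h
  | box xs Vs Ms B =>
      show ∀ V ∈ TList Vs, IsValueC V
      rw [TList_eq_map]
      intro V hV
      obtain ⟨W, hW, rfl⟩ := List.mem_map.1 hV
      exact value_T (h W hW)

theorem fvSC_TC (C) : fvSC (TC C) = fvSC C := by
  cases C with
  | appL M => exact fvC_T M
  | appR V => exact fvC_T V
  | box xs Vs Ms B => simp [TC, fvSC, fvCList_TList]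

theorem phiV {C A x} (hC : GoodSC C) (hx : x ∉ fvSC C) :
    EqvGen StepVC (fillSC C A) (.app (.lam x (fillSC C (.var x))) A) :=
  (EqvGen.symm _ _
    (eqv_one (R := StepVC) (stepV_fillSC C (StepVC.idArr (M := A))))).trans _ _ _
    (eqv_one (R := StepVC) (StepVC.lift hC hx))

theorem stepC_to_eqvV {P Q} (h : StepC P Q) : EqvGen StepVC (T P) (T Q) := by
  induction h with
  | @idLet x M => exact eqv_one (R := StepVC) StepVC.idArr
  | @betaLet x V M hV =>
      rw [show T (.letE x V M) = .app (.lam x (T M)) (T V) from rfl, substC_T]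
      exact eqv_one (R := StepVC) (StepVC.betaV (value_T hV))
  | @betaV x M V hV =>
      rw [show T (.app (.lam x M) V) = .app (.lam x (T M)) (T V) from rfl, substC_T]
      exact eqv_one (R := StepVC) (StepVC.betaV (value_T hV))
  | @etaV x V hV hx =>
      exact eqv_one (R := StepVC)
        (StepVC.etaV (value_T hV) (by rwa [fvC_T]))
  | @comp x y L N M hy =>
      refine eqv_one (R := StepVC) ?_
      have := StepVC.lift (C := .appR (.lam x (T M))) (x := y) (M := T N) (N := T L)
        (IsValueC.lam _ _) ?_
      · exact this
      · show y ∉ fvC (.lam x (T M))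
        rw [show fvC (TmC.lam x (T M)) = fvC (T M) \ {x} from rfl, fvC_T]
        simp only [Finset.mem_sdiff, not_and]
        intro hm
        exact absurd hm hy
  | @letC C A x hC hA hx =>
      rw [show T (.letE x A (fillSC C (.var x)))
          = .app (.lam x (T (fillSC C (.var x)))) (T A) from rfl,
        T_fillSC, T_fillSC]
      exact phiV (good_TC hC) (by rw [fvSC_TC]; exact hx)
  | @idBox x M => exact eqv_one (R := StepVC) StepVC.idBox
  | @betaBoxV ws zs x Ws Ps Ns ys V M h1 h2 h3 =>
      rw [T, T, TList_append, TList_append, TList_append, TList,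
        show T (.box ys Ns V) = .box ys (TList Ns) (T V) from rfl, substC_T]
      refine eqv_one (R := StepVC) (StepVC.betaBoxV ?_ ?_ (value_T h3))
      · rw [TList_eq_map, List.length_map]; exact h1
      · rw [TList_eq_map]
        intro W' hW'
        obtain ⟨W, hW, rfl⟩ := List.mem_map.1 hW'
        exact value_T (h2 W hW)
  | @appL M M' N _ ih =>
      exact eqv_congr (fun t => .app t (T N)) (fun _ _ hh => StepVC.appL hh) ih
  | @appR M N N' _ ih =>
      exact eqv_congr (fun t => .app (T M) t) (fun _ _ hh => StepVC.appR hh) ih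
  | @lam x M M' _ ih =>
      exact eqv_congr (fun t => .lam x t) (fun _ _ hh => StepVC.lam hh) ih
  | @letL x N N' M _ ih =>
      exact eqv_congr (fun t => .app (.lam x (T M)) t)
        (fun _ _ hh => StepVC.appR hh) ih
  | @letR x N M M' _ ih =>
      exact eqv_congr (fun t => .app (.lam x t) (T N))
        (fun _ _ hh => StepVC.appL (StepVC.lam hh)) ih
  | @boxArg xs Ps Qs N N' M _ ih =>
      rw [T, T, TList_append, TList_append, TList, TList]
      exact eqv_congr (fun t => .box xs (TList Ps ++ t :: TList Qs) (T M))
        (fun _ _ hh => StepVC.boxArg hh) ih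
  | @boxBody xs Ns M M' _ ih =>
      exact eqv_congr (fun t => .box xs (TList Ns) t)
        (fun _ _ hh => StepVC.boxBody hh) ih

end Dir2

/-- **Equivalence of the two call-by-value axiomatizations**: for terms `M`,
`N` of the call-by-value λ□-calculus (box bodies restricted to values, no
`let`), `M =v N` holds iff `M =c N` holds. -/
theorem cbv_computational_equiv (M N : TmC)
    (hM : LetFree M) (hN : LetFree N)
    (hM' : RestrictedC M) (hN' : RestrictedC N) :
    Relation.EqvGen StepVC M N ↔ Relation.EqvGen StepC M N := by
  constructor
  · intro h
    exact eqv_lift id (fun a b hab => stepV_to_eqvC hab) h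
  · intro h
    have := eqv_lift T (fun a b hab => stepC_to_eqvV hab) h
    rwa [T_letfree hM, T_letfree hN] at this

end LamBox
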